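/- arXiv:2405.04343 — 4 statements merged into one kernel-verified Lean document; each statement's English description precedes it below -/
import Mathlib

section
/- Let G be a group, K ⊆ G a finite subset, and δ > 0. Then there exists ε > 0 such that whenever F ⊆ G is a finite nonempty subset that is (K,ε)-invariant (i.e. |K·F △ F| < ε|F|), every subset F' ⊆ F with |F'| ≥ (1-ε)|F| is (K,δ)-invariant (i.e. |K·F' △ F'| < δ|F'|). -/
open scoped Pointwise

/-!
If `F' ⊆ F`, every point of `K F' △ F'` lies in `K F △ F`, in `K (F \ F')` or in `F \ F'`, so
`|K F' △ F'| ≤ |K F △ F| + (|K| + 1) |F \ F'|`. When `F` is `(K, ε)`-invariant and `F'` misses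
at most `ε |F|` points of `F`, this is `< (|K| + 2) ε |F| ≤ 2 (|K| + 2) ε |F'|`, which is below
`δ |F'|` once `ε` is small compared with `δ / (|K| + 2)`.
-/

namespace Finset

variable {G : Type*} [Mul G] [DecidableEq G]

theorem symmDiff_mul_subset_of_subset {K F F' : Finset G} (h : F' ⊆ F) :
    symmDiff (K * F') F' ⊆ symmDiff (K * F) F ∪ K * (F \ F') ∪ (F \ F') := by
  intro x hx
  simp only [mem_union, mem_symmDiff, mem_sdiff] at hx ⊢
  rcases hx with ⟨hxKF', hxF'⟩ | ⟨hxF', hxKF'⟩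
  · by_cases hxF : x ∈ F
    · exact Or.inr ⟨hxF, hxF'⟩
    · exact Or.inl (Or.inl (Or.inl ⟨mul_subset_mul_left h hxKF', hxF⟩))
  · by_cases hxKF : x ∈ K * F
    · obtain ⟨k, hk, f, hf, rfl⟩ := mem_mul.1 hxKF
      exact Or.inl (Or.inr (mul_mem_mul hk
        (mem_sdiff.2 ⟨hf, fun hfF' => hxKF' (mul_mem_mul hk hfF')⟩)))
    · exact Or.inl (Or.inl (Or.inr ⟨h hxF', hxKF⟩))

theorem card_symmDiff_mul_le_of_subset {K F F' : Finset G} (h : F' ⊆ F) :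
    #(symmDiff (K * F') F') ≤ #(symmDiff (K * F) F) + (#K + 1) * #(F \ F') :=
  calc #(symmDiff (K * F') F')
      ≤ #(symmDiff (K * F) F ∪ K * (F \ F') ∪ (F \ F')) :=
        card_le_card (symmDiff_mul_subset_of_subset h)
    _ ≤ #(symmDiff (K * F) F) + #(K * (F \ F')) + #(F \ F') :=
        (card_union_le _ _).trans (by gcongr; exact card_union_le _ _)
    _ ≤ #(symmDiff (K * F) F) + #K * #(F \ F') + #(F \ F') := by gcongr; exact card_mul_le
    _ = #(symmDiff (K * F) F) + (#K + 1) * #(F \ F') := by ring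

end Finset

open Finset in
/-- Lemma 2.2: for a finite `K ⊆ G` and `δ > 0`, there is `ε > 0` such that any
sufficiently large subset of a `(K,ε)`-invariant finite set is `(K,δ)`-invariant. -/
theorem stmt0 (G : Type*) [Group G] [DecidableEq G] (K : Finset G) (δ : ℝ) (hδ : 0 < δ) :
    ∃ ε > (0 : ℝ), ∀ F : Finset G, F.Nonempty →
      ((symmDiff (K * F) F).card : ℝ) < ε * F.card →
      ∀ F' ⊆ F, (1 - ε) * F.card ≤ (F'.card : ℝ) →
        ((symmDiff (K * F') F').card : ℝ) < δ * F'.card := by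
  set ε : ℝ := min (1 / 2) (δ / (2 * (#K + 2)))
  refine ⟨ε, by positivity, fun F _ hF F' hF'F hF' => ?_⟩
  have hε_half : ε ≤ 1 / 2 := min_le_left _ _
  have hεK : (#K + 2) * ε ≤ δ / 2 := by
    have : ε ≤ δ / (2 * (#K + 2)) := min_le_right _ _
    rw [le_div_iff₀ (by positivity)] at this
    linarith
  have hmissing : (#(F \ F') : ℝ) ≤ ε * #F := by
    rw [card_sdiff_of_subset hF'F, Nat.cast_sub (card_le_card hF'F)]
    linarith
  have hbound : (#(symmDiff (K * F') F') : ℝ) ≤ #(symmDiff (K * F) F) + (#K + 1) * #(F \ F') := by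
    exact_mod_cast card_symmDiff_mul_le_of_subset hF'F
  calc (#(symmDiff (K * F') F') : ℝ)
      < ε * #F + (#K + 1) * (ε * #F) := hbound.trans_lt (add_lt_add_of_lt_of_le hF (by gcongr))
    _ = (#K + 2) * ε * #F := by ring
    _ ≤ δ / 2 * #F := by gcongr
    _ ≤ δ * ((1 - ε) * #F) := by
        nlinarith [mul_nonneg (mul_nonneg hδ.le (Nat.cast_nonneg #F)) (sub_nonneg.2 hε_half)]
    _ ≤ δ * #F' := by gcongr
end

section
/- Let Λ be a group, Λ₀ ⊆ Λ a finite symmetric subset, n a positive natural number, Y a finite set with an action of Λ, and Y₀ ⊆ Y. Then there exists a function f : Y → [0,1] such that: (1) f(y) = 0 for all y ∈ Y₀; (2) |f(λ·y) − f(y)| ≤ 1/n for all y ∈ Y and λ ∈ Λ₀; and (3) the number of y ∈ Y with f(y) ≠ 1 is at most (1 + |Λ₀| + |Λ₀|² + ... + |Λ₀|^{n−1})·|Y₀|. -/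
/-!
Let `d y` be the word distance from `Y₀` to `y` in the Schreier graph of `(Y, Λ₀)`, truncated
at `n`, and put `f = d / n`. A point at distance `k < n` lies in the shell `Λ₀ ^ k • Y₀`,
of size at most `|Λ₀| ^ k |Y₀|`, so summing over `k < n` bounds `{f ≠ 1} = {d < n}`.
Moving by `l ∈ Λ₀` raises `d` by at most one, and by symmetry of `Λ₀` lowers it by at most one.
-/

open scoped Classical Pointwise
open Finset

section TruncDist

variable {Λ Y : Type*} [Monoid Λ] [MulAction Λ Y] (Λ₀ : Finset Λ) (Y₀ : Finset Y) (n : ℕ)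

lemma card_pow_smul_le (k : ℕ) : #(Λ₀ ^ k • Y₀) ≤ #Λ₀ ^ k * #Y₀ :=
  card_smul_le.trans (Nat.mul_le_mul_right _ card_pow_le)

lemma smul_mem_pow_succ_smul {k : ℕ} {l : Λ} {y : Y} (hl : l ∈ Λ₀) (hy : y ∈ Λ₀ ^ k • Y₀) :
    l • y ∈ Λ₀ ^ (k + 1) • Y₀ := by
  obtain ⟨g, hg, z, hz, rfl⟩ := mem_smul.1 hy
  rw [← mul_smul, pow_succ']
  exact smul_mem_smul (mul_mem_mul hl hg) hz

noncomputable def truncDist (y : Y) : ℕ :=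
  sInf {k | y ∈ Λ₀ ^ k • Y₀ ∨ k = n}

variable {Λ₀ Y₀ n}

lemma truncDist_le (y : Y) : truncDist Λ₀ Y₀ n y ≤ n :=
  Nat.sInf_le (Or.inr rfl)

lemma truncDist_le_of_mem {k : ℕ} {y : Y} (hy : y ∈ Λ₀ ^ k • Y₀) : truncDist Λ₀ Y₀ n y ≤ k :=
  Nat.sInf_le (Or.inl hy)

lemma mem_pow_truncDist_smul {y : Y} (hy : truncDist Λ₀ Y₀ n y < n) :
    y ∈ Λ₀ ^ truncDist Λ₀ Y₀ n y • Y₀ :=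
  (Nat.sInf_mem (s := {k | y ∈ Λ₀ ^ k • Y₀ ∨ k = n}) ⟨n, Or.inr rfl⟩).resolve_right hy.ne

lemma truncDist_eq_zero_of_mem {y : Y} (hy : y ∈ Y₀) : truncDist Λ₀ Y₀ n y = 0 :=
  Nat.le_zero.1 (truncDist_le_of_mem (by rwa [pow_zero, one_smul]))

lemma truncDist_smul_le {l : Λ} (hl : l ∈ Λ₀) (y : Y) :
    truncDist Λ₀ Y₀ n (l • y) ≤ truncDist Λ₀ Y₀ n y + 1 := by
  rcases (truncDist_le (Λ₀ := Λ₀) (Y₀ := Y₀) y).lt_or_eq with hy | hy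
  · exact truncDist_le_of_mem (smul_mem_pow_succ_smul Λ₀ Y₀ hl (mem_pow_truncDist_smul hy))
  · have := truncDist_le (Λ₀ := Λ₀) (Y₀ := Y₀) (n := n) (l • y)
    omega

lemma card_truncDist_lt_le [Fintype Y] :
    #{y | truncDist Λ₀ Y₀ n y < n} ≤ ∑ k ∈ range n, #Λ₀ ^ k * #Y₀ := calc
  _ ≤ #((range n).biUnion fun k => Λ₀ ^ k • Y₀) := by
      refine card_le_card fun y hy => ?_
      have hlt : truncDist Λ₀ Y₀ n y < n := (mem_filter.1 hy).2
      exact mem_biUnion.2 ⟨_, mem_range.2 hlt, mem_pow_truncDist_smul hlt⟩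
  _ ≤ ∑ k ∈ range n, #(Λ₀ ^ k • Y₀) := card_biUnion_le
  _ ≤ _ := sum_le_sum fun k _ => card_pow_smul_le Λ₀ Y₀ k

end TruncDist

lemma abs_truncDist_smul_sub_le {Λ Y : Type*} [Group Λ] [MulAction Λ Y] {Λ₀ : Finset Λ}
    (hsym : ∀ l ∈ Λ₀, l⁻¹ ∈ Λ₀) (Y₀ : Finset Y) (n : ℕ) {l : Λ} (hl : l ∈ Λ₀) (y : Y) :
    |(truncDist Λ₀ Y₀ n (l • y) : ℝ) - truncDist Λ₀ Y₀ n y| ≤ 1 := by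
  have hup := truncDist_smul_le (Y₀ := Y₀) (n := n) hl y
  have hdown := truncDist_smul_le (Y₀ := Y₀) (n := n) (hsym l hl) (l • y)
  rw [inv_smul_smul] at hdown
  rw [abs_sub_le_iff, sub_le_iff_le_add', sub_le_iff_le_add']
  exact ⟨mod_cast hup, mod_cast hdown⟩

/-- The "wedding cake" lemma: given a finite symmetric `Λ₀ ⊆ Λ` acting on a finite set `Y`
and `Y₀ ⊆ Y`, there is `f : Y → [0,1]` vanishing on `Y₀`, `Λ₀`-Lipschitz with constant `1/n`,
and equal to `1` outside a set of size at most `(1 + |Λ₀| + ⋯ + |Λ₀|^{n-1})·|Y₀|`. -/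
theorem stmt1 (Λ : Type*) [Group Λ] (Λ₀ : Finset Λ)
    (hsym : ∀ l ∈ Λ₀, l⁻¹ ∈ Λ₀) (n : ℕ) (hn : 0 < n)
    (Y : Type*) [Fintype Y] [MulAction Λ Y] (Y₀ : Finset Y) :
    ∃ f : Y → ℝ, (∀ y, f y ∈ Set.Icc (0 : ℝ) 1) ∧
      (∀ y ∈ Y₀, f y = 0) ∧
      (∀ y : Y, ∀ l ∈ Λ₀, |f (l • y) - f y| ≤ 1 / n) ∧
      ((Finset.univ.filter fun y : Y => f y ≠ 1).card : ℝ) ≤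
        (∑ i ∈ Finset.range n, (Λ₀.card : ℝ) ^ i) * Y₀.card := by
  have hn' : (0 : ℝ) < n := Nat.cast_pos.2 hn
  refine ⟨fun y => (truncDist Λ₀ Y₀ n y : ℝ) / n, fun y => ⟨by positivity, ?_⟩,
    fun y hy => by simp [truncDist_eq_zero_of_mem hy], fun y l hl => ?_, ?_⟩
  · exact div_le_one_of_le₀ (Nat.cast_le.2 (truncDist_le y)) hn'.le
  · rw [← sub_div, abs_div, abs_of_pos hn']
    exact div_le_div_of_nonneg_right (abs_truncDist_smul_sub_le hsym Y₀ n hl y) hn'.le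
  · have hsub : univ.filter (fun y => (truncDist Λ₀ Y₀ n y : ℝ) / n ≠ 1) ⊆
        univ.filter (fun y => truncDist Λ₀ Y₀ n y < n) := by
      intro y hy
      simp only [mem_filter, mem_univ, true_and] at hy ⊢
      refine (truncDist_le y).lt_of_ne fun h => hy ?_
      rw [h, div_self hn'.ne']
    calc _ ≤ (#{y | truncDist Λ₀ Y₀ n y < n} : ℝ) := Nat.cast_le.2 (card_le_card hsub)
      _ ≤ ((∑ k ∈ range n, #Λ₀ ^ k * #Y₀ : ℕ) : ℝ) := Nat.cast_le.2 card_truncDist_lt_le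
      _ = _ := by push_cast [sum_mul]; rfl
end

section
/- Let Λ be a countable amenable group, Λₙ ⊴ Λ a finite-index normal subgroup, K ⊆ Λ finite, and φ : Λ/Λₙ → Λ a section of the quotient map πₙ such that the set F = φ(Λ/Λₙ) is (K, ε/|K|)-invariant, i.e. |KF \ F| < (ε/|K|)|F|. Then the set E = {t ∈ Λ/Λₙ : λφ(t) ≠ φ(πₙ(λ)t) for some λ ∈ K} satisfies |E| < ε·|Λ/Λₙ|. -/
open scoped Pointwise Classical

/-!
If `l * φ t` lies in `F = φ(Q)`, say `l * φ t = φ s`, then applying `π` gives `s = π l * t`, so `φ`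
is equivariant at `(l, t)`. Hence each non-equivariant `t` is witnessed by some `l ∈ K` with
`l * φ t ∈ KF \ F`, and `t ↦ (l, l * φ t)` is injective because `φ` is. This bounds the number of
bad points by `|K| · |KF \ F| < ε |F| = ε |Q|`.
-/

section

variable {G Q : Type*} [Group G] [Group Q] {π : G →* Q} {φ : Q → G}

theorem Function.LeftInverse.mul_eq_of_mul_mem_range (hφ : Function.LeftInverse π φ)
    {l : G} {t : Q} (h : l * φ t ∈ Set.range φ) : l * φ t = φ (π l * t) := by
  obtain ⟨s, hs⟩ := h
  have : s = π l * t := by rw [← hφ s, hs, map_mul, hφ]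
  rw [← hs, this]

variable [Fintype Q]

theorem Function.LeftInverse.card_nonequivariant_le (hφ : Function.LeftInverse π φ)
    (K : Finset G) :
    (Finset.univ.filter fun t => ∃ l ∈ K, l * φ t ≠ φ (π l * t)).card ≤
      K.card * ((K * Finset.univ.image φ) \ Finset.univ.image φ).card := by
  rw [← Finset.card_product]
  choose! w hwK hwne using fun t (ht : ∃ l ∈ K, l * φ t ≠ φ (π l * t)) => ht
  refine Finset.card_le_card_of_injOn (fun t => (w t, w t * φ t)) ?_ ?_
  · intro t ht
    have ht := (Finset.mem_filter.mp ht).2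
    refine Finset.mem_product.mpr ⟨hwK t ht, Finset.mem_sdiff.mpr ⟨?_, fun hmem => ?_⟩⟩
    · exact Finset.mul_mem_mul (hwK t ht) (Finset.mem_image_of_mem _ (Finset.mem_univ t))
    · obtain ⟨s, -, hs⟩ := Finset.mem_image.mp hmem
      exact hwne t ht (hφ.mul_eq_of_mul_mem_range ⟨s, hs⟩)
  · intro a _ b _ hab
    obtain ⟨hw, hmul⟩ := Prod.mk.inj hab
    rw [hw] at hmul
    exact hφ.injective (mul_left_cancel hmul)

end

theorem stmt3_general (Λ : Type*) [Group Λ]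
    (N : Subgroup Λ) [N.Normal] [Fintype (Λ ⧸ N)]
    (K : Finset Λ) (ε : ℝ)
    (φ : Λ ⧸ N → Λ) (hφ : ∀ t, (QuotientGroup.mk (φ t) : Λ ⧸ N) = t)
    (hinv : (((K * Finset.univ.image φ) \ Finset.univ.image φ).card : ℝ)
      < (ε / K.card) * (Finset.univ.image φ).card) :
    ((Finset.univ.filter fun t : Λ ⧸ N =>
        ∃ l ∈ K, l * φ t ≠ φ ((QuotientGroup.mk l : Λ ⧸ N) * t)).card : ℝ)
      < ε * Fintype.card (Λ ⧸ N) := by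
  have hsec : Function.LeftInverse (QuotientGroup.mk' N) φ := hφ
  have hK : (0 : ℝ) < K.card := by
    rcases K.eq_empty_or_nonempty with rfl | hK
    · simp at hinv -- `ε / 0 = 0`, so `hinv` reads `0 < 0`
    · exact_mod_cast hK.card_pos
  have hF : (Finset.univ.image φ).card = Fintype.card (Λ ⧸ N) := by
    rw [Finset.card_image_of_injective _ hsec.injective, Finset.card_univ]
  calc _ ≤ (K.card : ℝ) * ((K * Finset.univ.image φ) \ Finset.univ.image φ).card := by
        exact_mod_cast hsec.card_nonequivariant_le K
    _ < K.card * ((ε / K.card) * (Finset.univ.image φ).card) := mul_lt_mul_of_pos_left hinv hK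
    _ = ε * Fintype.card (Λ ⧸ N) := by rw [hF]; field_simp

/-- Weiss-type lemma (necessity direction): if `φ` is a section of the quotient map
`Λ → Λ/Λₙ` whose image `F` is `(K, ε/|K|)`-invariant in the sense that
`|KF \ F| < (ε/|K|)|F|`, then the set of points where `φ` fails to be `K`-equivariant
has cardinality less than `ε·|Λ/Λₙ|`. -/
theorem stmt3 (Λ : Type*) [Group Λ] [Countable Λ]
    (N : Subgroup Λ) [N.Normal] [Fintype (Λ ⧸ N)]
    (K : Finset Λ) (ε : ℝ) (hε : 0 < ε)
    (φ : Λ ⧸ N → Λ) (hφ : ∀ t, (QuotientGroup.mk (φ t) : Λ ⧸ N) = t)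
    (hinv : (((K * Finset.univ.image φ) \ Finset.univ.image φ).card : ℝ)
      < (ε / K.card) * (Finset.univ.image φ).card) :
    ((Finset.univ.filter fun t : Λ ⧸ N =>
        ∃ l ∈ K, l * φ t ≠ φ ((QuotientGroup.mk l : Λ ⧸ N) * t)).card : ℝ)
      < ε * Fintype.card (Λ ⧸ N) :=
  stmt3_general Λ N K ε φ hφ hinv
end

section
/- Let G be a countable amenable group acting on a compact metrizable space X, and suppose the action is almost finite in measure. Then the action is essentially free: for every g ∈ G \ {1} and every G-invariant Borel probability measure μ on X, μ({x ∈ X : g·x = x}) = 0. -/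
open scoped Pointwise Classical
open MeasureTheory

/-- A castle: the levels `s • V i`, for `s ∈ S i` and all `i`, are pairwise disjoint. -/
def IsCastle (G X : Type*) [Group G] [MulAction G X] {I : Type*}
    (S : I → Finset G) (V : I → Set X) : Prop :=
  ∀ i j : I, ∀ s ∈ S i, ∀ t ∈ S j, (i ≠ j ∨ s ≠ t) → Disjoint (s • V i) (t • V j)

/-- `S` is `(K,δ)`-invariant: `|K·S △ S| < δ|S|`. -/
def FolnerInvariant (G : Type*) [Group G] (K : Finset G) (δ : ℝ) (S : Finset G) : Prop :=
  ((symmDiff (K * S) S).card : ℝ) < δ * S.card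

/-- An action of a countable group on a compact metric space is almost finite in measure:
for every finite `K ⊆ G` and `δ, ε > 0` there is an open castle with `(K,δ)`-invariant
shapes, levels of diameter at most `δ`, and footprint of lower Banach density at least
`1 - ε` (equivalently, of measure at least `1 - ε` with respect to every invariant Borel
probability measure). -/
def AlmostFiniteInMeasure (G X : Type*) [Group G] [MulAction G X]
    [MetricSpace X] [MeasurableSpace X] : Prop :=
  ∀ (K : Finset G) (δ ε : ℝ), 0 < δ → 0 < ε →
    ∃ (I : Type) (_ : Fintype I) (S : I → Finset G) (V : I → Set X),
      IsCastle G X S V ∧ (∀ i, IsOpen (V i)) ∧ (∀ i, (S i).Nonempty) ∧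
      (∀ i, ∀ s ∈ S i, Metric.diam (s • V i) ≤ δ) ∧
      (∀ i, FolnerInvariant G K δ (S i)) ∧
      (∀ μ : Measure X, IsProbabilityMeasure μ →
        (∀ (g : G) (s : Set X), μ ((g • ·) ⁻¹' s) = μ s) →
        ENNReal.ofReal (1 - ε) ≤ μ (⋃ i, ⋃ s ∈ (S i : Set G), s • V i))

/-!
Fix `g ≠ 1` and a castle with `({g}, δ)`-invariant shapes whose footprint has measure at least
`1 - ε`. If `x = s • v` lies on the level `s • V i` and `g • x = x`, then `x` also lies on
`(g * s) • V i`, so disjointness of the levels forces `g * s ∉ S i`. By invariance all levels of a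
tower have the same measure, and invariance of the shapes says that at most a `δ`-fraction of the
levels of each tower are of this kind; as the castle has total measure at most `1`, these levels
have total measure at most `δ`. Hence the fixed-point set of `g` has measure at most `δ + ε`.
-/

open scoped ENNReal
open Finset MulAction

theorem Finset.card_filter_mul_notMem_le_card_symmDiff {G : Type*} [Group G] (g : G)
    (S : Finset G) : #(S.filter (g * · ∉ S)) ≤ #(symmDiff ({g} * S) S) :=
  card_le_card_of_injOn (g * ·)
    (fun _ hs ↦ mem_symmDiff.2 <| .inl
      ⟨mul_mem_mul (mem_singleton_self g) (mem_filter.1 hs).1,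
        (mem_filter.1 hs).2⟩)
    (mul_right_injective g).injOn

theorem FolnerInvariant.card_filter_mul_notMem_le {G : Type*} [Group G] {g : G} {δ : ℝ}
    {S : Finset G} (h : FolnerInvariant G {g} δ S) :
    (#(S.filter (g * · ∉ S)) : ℝ≥0∞) ≤ ENNReal.ofReal δ * #S := by
  rw [← ENNReal.ofReal_natCast, ← ENNReal.ofReal_natCast, ← ENNReal.ofReal_mul' (by positivity)]
  refine ENNReal.ofReal_le_ofReal (le_trans ?_ h.le)
  exact_mod_cast S.card_filter_mul_notMem_le_card_symmDiff g

theorem measure_smul_set_of_forall_preimage {G X : Type*} [Group G] [MulAction G X]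
    [MeasurableSpace X] {μ : Measure X} (hμ : ∀ (h : G) (s : Set X), μ ((h • ·) ⁻¹' s) = μ s)
    (g : G) (W : Set X) : μ (g • W) = μ W := by
  rw [← Set.preimage_smul_inv]
  exact hμ g⁻¹ W

def castleFootprint {G X I : Type*} [Group G] [MulAction G X] (S : I → Finset G)
    (V : I → Set X) : Set X :=
  ⋃ i, ⋃ s ∈ (S i : Set G), s • V i

section Castle

variable {G X I : Type*} [Group G] [MulAction G X] {S : I → Finset G} {V : I → Set X}

theorem IsCastle.fixedBy_inter_castleFootprint_subset (hc : IsCastle G X S V) {g : G}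
    (hg : g ≠ 1) :
    fixedBy X g ∩ castleFootprint S V ⊆
      castleFootprint (fun i ↦ (S i).filter (g * · ∉ S i)) V := by
  rintro x ⟨hfix, hx⟩
  simp only [castleFootprint, Set.mem_iUnion, coe_filter] at hx ⊢
  obtain ⟨i, s, hs, v, hv, rfl⟩ := hx
  refine ⟨i, s, ⟨hs, fun hgs ↦ ?_⟩, v, hv, rfl⟩
  have hne : s ≠ g * s := fun h ↦ hg (mul_eq_right.1 h.symm)
  refine Set.disjoint_left.1 (hc i i s hs (g * s) hgs (.inr hne)) ⟨v, hv, rfl⟩ ?_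
  rw [← hfix, mul_smul]
  exact Set.smul_mem_smul_set (Set.smul_mem_smul_set hv)

variable [MeasurableSpace X] [Fintype I] {μ : Measure X}

theorem measure_castleFootprint_le (hμ : ∀ (h : G) (s : Set X), μ ((h • ·) ⁻¹' s) = μ s) :
    μ (castleFootprint S V) ≤ ∑ i, #(S i) * μ (V i) :=
  calc μ (castleFootprint S V) ≤ ∑ i, μ (⋃ s ∈ (S i : Set G), s • V i) :=
        measure_iUnion_fintype_le _ _
    _ ≤ ∑ i, ∑ s ∈ S i, μ (s • V i) := by gcongr with i; exact measure_biUnion_finset_le _ _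
    _ = ∑ i, #(S i) * μ (V i) := by
        simp only [measure_smul_set_of_forall_preimage hμ, sum_const, nsmul_eq_mul]

theorem IsCastle.sum_card_mul_measure_le (hc : IsCastle G X S V)
    (hμ : ∀ (h : G) (s : Set X), μ ((h • ·) ⁻¹' s) = μ s)
    (hmeas : ∀ i, ∀ s ∈ S i, MeasurableSet (s • V i)) :
    ∑ i, #(S i) * μ (V i) ≤ μ Set.univ := by
  have hdisj : Set.PairwiseDisjoint (univ.sigma S : Set (Σ _ : I, G)) (fun p ↦ p.2 • V p.1) := by
    rintro ⟨i, s⟩ hs ⟨j, t⟩ ht hne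
    simp only [coe_sigma, coe_univ, Set.mem_sigma_iff, Set.mem_univ, true_and, mem_coe] at hs ht
    refine hc i j s hs t ht ?_
    contrapose! hne
    obtain ⟨rfl, rfl⟩ := hne
    rfl
  calc ∑ i, #(S i) * μ (V i) = ∑ p ∈ univ.sigma S, μ (p.2 • V p.1) := by
        simp only [sum_sigma, measure_smul_set_of_forall_preimage hμ, sum_const, nsmul_eq_mul]
    _ = μ (⋃ p ∈ univ.sigma S, p.2 • V p.1) :=
        (measure_biUnion_finset hdisj fun p hp ↦ hmeas p.1 p.2 (mem_sigma.1 hp).2).symm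
    _ ≤ μ Set.univ := measure_mono (Set.subset_univ _)

theorem IsCastle.measure_fixedBy_inter_castleFootprint_le (hc : IsCastle G X S V)
    (hμ : ∀ (h : G) (s : Set X), μ ((h • ·) ⁻¹' s) = μ s)
    (hmeas : ∀ i, ∀ s ∈ S i, MeasurableSet (s • V i)) {g : G} (hg : g ≠ 1) {δ : ℝ}
    (hfol : ∀ i, FolnerInvariant G {g} δ (S i)) :
    μ (fixedBy X g ∩ castleFootprint S V) ≤ ENNReal.ofReal δ * μ Set.univ :=
  calc μ (fixedBy X g ∩ castleFootprint S V)
      ≤ μ (castleFootprint (fun i ↦ (S i).filter (g * · ∉ S i)) V) :=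
        measure_mono (hc.fixedBy_inter_castleFootprint_subset hg)
    _ ≤ ∑ i, #((S i).filter (g * · ∉ S i)) * μ (V i) := measure_castleFootprint_le hμ
    _ ≤ ∑ i, ENNReal.ofReal δ * #(S i) * μ (V i) := by
        gcongr with i
        exact (hfol i).card_filter_mul_notMem_le
    _ = ENNReal.ofReal δ * ∑ i, #(S i) * μ (V i) := by simp only [mul_sum, mul_assoc]
    _ ≤ ENNReal.ofReal δ * μ Set.univ := by gcongr; exact hc.sum_card_mul_measure_le hμ hmeas

end Castle

theorem AlmostFiniteInMeasure.measure_fixedBy_le {G X : Type*} [Group G] [MetricSpace X]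
    [MeasurableSpace X] [BorelSpace X] [MulAction G X] (haf : AlmostFiniteInMeasure G X)
    (hcont : ∀ g : G, Continuous fun x : X => g • x) {g : G} (hg : g ≠ 1) (μ : Measure X)
    [IsProbabilityMeasure μ] (hμ : ∀ (h : G) (s : Set X), μ ((h • ·) ⁻¹' s) = μ s) {δ ε : ℝ}
    (hδ : 0 < δ) (hε : 0 < ε) :
    μ (fixedBy X g) ≤ ENNReal.ofReal δ + ENNReal.ofReal ε := by
  obtain ⟨I, _, S, V, hc, hVopen, -, -, hfol, hfoot⟩ := haf {g} δ ε hδ hε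
  have : ContinuousConstSMul G X := ⟨hcont⟩
  have hU : IsOpen (castleFootprint S V) :=
    isOpen_iUnion fun i ↦ isOpen_biUnion fun s _ ↦ (hVopen i).smul s
  have hUc : μ (castleFootprint S V)ᶜ ≤ ENNReal.ofReal ε := by
    rw [prob_compl_eq_one_sub hU.measurableSet, tsub_le_iff_right]
    calc 1 = ENNReal.ofReal (ε + (1 - ε)) := by simp
      _ ≤ ENNReal.ofReal ε + μ (castleFootprint S V) :=
        ENNReal.ofReal_add_le.trans (add_le_add_right (hfoot μ inferInstance hμ) _)
  calc μ (fixedBy X g)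
      ≤ μ (fixedBy X g ∩ castleFootprint S V) + μ (fixedBy X g \ castleFootprint S V) :=
        measure_le_inter_add_sdiff _ _ _
    _ ≤ ENNReal.ofReal δ * μ Set.univ + μ (castleFootprint S V)ᶜ :=
        add_le_add (hc.measure_fixedBy_inter_castleFootprint_le hμ
          (fun i s _ ↦ ((hVopen i).smul s).measurableSet) hg hfol)
          (measure_mono (Set.sdiff_subset_compl _ _))
    _ ≤ ENNReal.ofReal δ + ENNReal.ofReal ε := by
        rw [measure_univ, mul_one]
        exact add_le_add_right hUc _

theorem stmt5_general {G X : Type*} [Group G]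
    [MetricSpace X] [MeasurableSpace X] [BorelSpace X]
    [MulAction G X] (hcont : ∀ g : G, Continuous fun x : X => g • x)
    (haf : AlmostFiniteInMeasure G X)
    (g : G) (hg : g ≠ 1) (μ : Measure X) [IsProbabilityMeasure μ]
    (hμ : ∀ (h : G) (s : Set X), μ ((h • ·) ⁻¹' s) = μ s) :
    μ {x : X | g • x = x} = 0 := by
  refine le_antisymm (ENNReal.le_of_forall_pos_le_add fun c hc _ ↦ ?_) zero_le
  have hc2 : (0 : ℝ) < c / 2 := by positivity
  calc μ {x : X | g • x = x} ≤ ENNReal.ofReal (c / 2) + ENNReal.ofReal (c / 2) :=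
        haf.measure_fixedBy_le hcont hg μ hμ hc2 hc2
    _ = 0 + c := by
        rw [← ENNReal.ofReal_add hc2.le hc2.le, add_halves, ENNReal.ofReal_coe_nnreal, zero_add]

/-- If an action of a countable amenable group on a compact metrizable space is almost
finite in measure, then it is essentially free: every nontrivial group element fixes a
null set with respect to every invariant Borel probability measure. -/
theorem stmt5 {G X : Type*} [Group G] [Countable G]
    [MetricSpace X] [CompactSpace X] [MeasurableSpace X] [BorelSpace X]
    [MulAction G X] (hcont : ∀ g : G, Continuous fun x : X => g • x)
    (haf : AlmostFiniteInMeasure G X)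
    (g : G) (hg : g ≠ 1) (μ : Measure X) [IsProbabilityMeasure μ]
    (hμ : ∀ (h : G) (s : Set X), μ ((h • ·) ⁻¹' s) = μ s) :
    μ {x : X | g • x = x} = 0 :=
  stmt5_general hcont haf g hg μ hμ
end
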